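/- For the parameterization W(κ) = arctan(e^{2κ}) - π/4 and b = π/4, the identity sin(W(κ)σ + (π/4)I) = cos(W(-κ)σ + (π/4)I) holds for any involution σ, and consequently the failed post-selection branch implements (up to normalization) the operator e^{+κσ} instead of e^{-κσ}. -/

import Mathlib

open Matrix

/-- Alternative RBM weight `W(κ) = arctan(e^{2κ}) - π/4`. -/
noncomputable def Wparam2 (κ : ℝ) : ℝ := Real.arctan (Real.exp (2 * κ)) - Real.pi / 4

/-- `cos(Wσ + bI)` for an involution `σ`, via functional calculus. -/
noncomputable def opCos {d : ℕ} (W b : ℝ) (σ : Matrix (Fin d) (Fin d) ℂ) :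
    Matrix (Fin d) (Fin d) ℂ :=
  (((Real.cos (b + W) + Real.cos (b - W)) / 2 : ℝ) : ℂ) • (1 : Matrix (Fin d) (Fin d) ℂ) +
    (((Real.cos (b + W) - Real.cos (b - W)) / 2 : ℝ) : ℂ) • σ

/-- `sin(Wσ + bI)` for an involution `σ`, via functional calculus. -/
noncomputable def opSin {d : ℕ} (W b : ℝ) (σ : Matrix (Fin d) (Fin d) ℂ) :
    Matrix (Fin d) (Fin d) ℂ :=
  (((Real.sin (b + W) + Real.sin (b - W)) / 2 : ℝ) : ℂ) • (1 : Matrix (Fin d) (Fin d) ℂ) +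
    (((Real.sin (b + W) - Real.sin (b - W)) / 2 : ℝ) : ℂ) • σ

/-! The weight is chosen so that `π/4 + W(κ) = arctan(e^{2κ})` and `π/4 - W(κ)` is its complement
`π/2 - arctan(e^{2κ})`; this gives the sin/cos exchange under `κ ↦ -κ`, and makes the coefficients of
`sin(W(κ)σ + π/4)` equal to `(e^{2κ} ± 1) / (2√(1 + e^{4κ}))`. Since `σ² = 1`,
`exp(κσ) = cosh κ • 1 + sinh κ • σ`, and `(e^{2κ} + 1) / 2 = e^κ cosh κ`, `(e^{2κ} - 1) / 2 = e^κ sinh κ`. -/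

open Real

lemma Wparam2_neg (κ : ℝ) : Wparam2 (-κ) = -Wparam2 κ := by
  rw [Wparam2, Wparam2, mul_neg, exp_neg, arctan_inv_of_pos (exp_pos _)]
  ring

lemma opSin_pi_div_four_eq_opCos_neg {d : ℕ} (W : ℝ) (σ : Matrix (Fin d) (Fin d) ℂ) :
    opSin W (π / 4) σ = opCos (-W) (π / 4) σ := by
  have hsub : cos (π / 4 - -W) = sin (π / 4 - W) := by
    rw [← cos_pi_div_two_sub]; ring_nf
  have hadd : cos (π / 4 + -W) = sin (π / 4 + W) := by
    rw [← cos_pi_div_two_sub]; ring_nf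
  rw [opSin, opCos, hsub, hadd]

lemma sin_pi_div_four_add_Wparam2 (κ : ℝ) :
    sin (π / 4 + Wparam2 κ) = exp (2 * κ) / √(1 + exp (2 * κ) ^ 2) := by
  rw [Wparam2, add_sub_cancel, sin_arctan]

lemma sin_pi_div_four_sub_Wparam2 (κ : ℝ) :
    sin (π / 4 - Wparam2 κ) = 1 / √(1 + exp (2 * κ) ^ 2) := by
  rw [Wparam2, show π / 4 - (arctan (exp (2 * κ)) - π / 4) = π / 2 - arctan (exp (2 * κ)) by ring,
    sin_pi_div_two_sub, cos_arctan]

lemma exp_mul_cosh (x : ℝ) : exp x * cosh x = (exp (2 * x) + 1) / 2 := by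
  rw [cosh_eq, two_mul, exp_add, ← mul_div_assoc, mul_add, ← exp_add x (-x), add_neg_cancel,
    exp_zero]

lemma exp_mul_sinh (x : ℝ) : exp x * sinh x = (exp (2 * x) - 1) / 2 := by
  rw [sinh_eq, two_mul, exp_add, ← mul_div_assoc, mul_sub, ← exp_add x (-x), add_neg_cancel,
    exp_zero]

lemma exp_smul_of_mul_self_eq_one {A : Type*} [Ring A] [Algebra ℂ A] [TopologicalSpace A]
    [IsTopologicalRing A] [ContinuousSMul ℂ A] [T2Space A] (z : ℂ) {a : A} (ha : a * a = 1) :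
    NormedSpace.exp (z • a) = Complex.cosh z • (1 : A) + Complex.sinh z • a := by
  have ha2 : a ^ 2 = 1 := by rw [sq, ha]
  rw [NormedSpace.exp_eq_tsum (𝕂 := ℂ)]
  refine HasSum.tsum_eq ?_
  have heven : HasSum (fun k : ℕ => (((2 * k).factorial : ℂ)⁻¹ • (z • a) ^ (2 * k)))
      (Complex.cosh z • (1 : A)) := by
    convert (Complex.hasSum_cosh z).smul_const (1 : A) using 2 with k
    rw [smul_pow, pow_mul a, ha2, one_pow, smul_smul, pow_mul, div_eq_mul_inv, mul_comm]
  have hodd : HasSum (fun k : ℕ => (((2 * k + 1).factorial : ℂ)⁻¹ • (z • a) ^ (2 * k + 1)))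
      (Complex.sinh z • a) := by
    convert (Complex.hasSum_sinh z).smul_const a using 2 with k
    rw [smul_pow, pow_succ a, pow_mul a, ha2, one_pow, one_mul, smul_smul, pow_succ, pow_mul,
      div_eq_mul_inv, mul_comm]
  exact heven.even_add_odd hodd

lemma opSin_pi_div_four_Wparam2 {d : ℕ} (κ : ℝ) (σ : Matrix (Fin d) (Fin d) ℂ) :
    opSin (Wparam2 κ) (π / 4) σ = ((exp κ / √(1 + exp (2 * κ) ^ 2) : ℝ) : ℂ) •
      (Complex.cosh κ • (1 : Matrix (Fin d) (Fin d) ℂ) + Complex.sinh κ • σ) := by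
  have hcosh : (exp (2 * κ) / √(1 + exp (2 * κ) ^ 2) + 1 / √(1 + exp (2 * κ) ^ 2)) / 2 =
      exp κ / √(1 + exp (2 * κ) ^ 2) * cosh κ := by
    rw [div_mul_eq_mul_div, exp_mul_cosh]; ring
  have hsinh : (exp (2 * κ) / √(1 + exp (2 * κ) ^ 2) - 1 / √(1 + exp (2 * κ) ^ 2)) / 2 =
      exp κ / √(1 + exp (2 * κ) ^ 2) * sinh κ := by
    rw [div_mul_eq_mul_div, exp_mul_sinh]; ring
  rw [opSin, sin_pi_div_four_add_Wparam2, sin_pi_div_four_sub_Wparam2, hcosh, hsinh,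
    ← Complex.ofReal_cosh, ← Complex.ofReal_sinh, smul_add, smul_smul, smul_smul,
    Complex.ofReal_mul, Complex.ofReal_mul]

theorem rbm_failed_branch_general {d : ℕ} (κ : ℝ) (σ : Matrix (Fin d) (Fin d) ℂ)
    (hinv : σ * σ = 1) :
    opSin (Wparam2 κ) (Real.pi / 4) σ = opCos (Wparam2 (-κ)) (Real.pi / 4) σ ∧
    ∃ c : ℂ, c ≠ 0 ∧
      opSin (Wparam2 κ) (Real.pi / 4) σ = c • NormedSpace.exp ((κ : ℂ) • σ) := by
  refine ⟨by rw [Wparam2_neg, opSin_pi_div_four_eq_opCos_neg],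
    ((exp κ / √(1 + exp (2 * κ) ^ 2) : ℝ) : ℂ), Complex.ofReal_ne_zero.mpr (by positivity), ?_⟩
  rw [opSin_pi_div_four_Wparam2, exp_smul_of_mul_self_eq_one _ hinv]

/-- `sin(W(κ)σ + (π/4)I) = cos(W(-κ)σ + (π/4)I)`, and consequently the failed
post-selection branch implements `e^{+κσ}` up to normalization. -/
theorem rbm_failed_branch {d : ℕ} (κ : ℝ) (σ : Matrix (Fin d) (Fin d) ℂ)
    (hherm : σ.IsHermitian) (hinv : σ * σ = 1) :
    opSin (Wparam2 κ) (Real.pi / 4) σ = opCos (Wparam2 (-κ)) (Real.pi / 4) σ ∧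
    ∃ c : ℂ, c ≠ 0 ∧
      opSin (Wparam2 κ) (Real.pi / 4) σ = c • NormedSpace.exp ((κ : ℂ) • σ) :=
  rbm_failed_branch_general κ σ hinv
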